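/- The parity function on n Boolean variables cannot be computed by a polynomial threshold function of degree less than n. That is, if p is a real polynomial in n variables of degree d such that for every x in {0,1}^n, sign(p(x)) = 1 if x_1 + ... + x_n is even and sign(p(x)) = -1 if it is odd, then d >= n. -/

import Mathlib

/-!
If `p` had total degree below `n`, every monomial of `p` would miss some variable `xᵢ`, and
summing `±1`-weighted values over the cube in the direction of that variable cancels it. Hence
`∑ₓ (-1)^|x| p(x) = 0`. A parity-computing `p` makes every term of this sum nonnegative and the
terms at odd points strictly positive, a contradiction.
-/

open MvPolynomial Finset

section SignedCubeSum

variable {σ R : Type*} [Fintype σ] [CommRing R]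

theorem neg_one_pow_card_filter_eq_prod (x : σ → Bool) :
    (-1 : R) ^ #{i | x i} = ∏ i, if x i then (-1 : R) else 1 := by
  rw [prod_ite, prod_const, prod_const_one, mul_one]

theorem sum_neg_one_pow_card_mul_prod_pow_eq_zero [DecidableEq σ] (d : σ → ℕ) (hd : ∃ i, d i = 0) :
    ∑ x : σ → Bool, (-1 : R) ^ #{i | x i} * ∏ i, (if x i then (1 : R) else 0) ^ d i = 0 := by
  obtain ⟨i₀, hi₀⟩ := hd
  calc ∑ x : σ → Bool, (-1 : R) ^ #{i | x i} * ∏ i, (if x i then (1 : R) else 0) ^ d i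
      = ∑ x : σ → Bool, ∏ i, (if x i then (-1 : R) else 1) * (if x i then 1 else 0) ^ d i := by
        simp only [neg_one_pow_card_filter_eq_prod, prod_mul_distrib]
    _ = ∏ i, ∑ b : Bool, (if b then (-1 : R) else 1) * (if b then 1 else 0) ^ d i := by
        rw [Fintype.prod_sum]
    _ = 0 := prod_eq_zero (mem_univ i₀) (by simp [hi₀])

theorem exists_eq_zero_of_mem_support_of_totalDegree_lt {p : MvPolynomial σ R} {d : σ →₀ ℕ}
    (hd : d ∈ p.support) (hp : p.totalDegree < Fintype.card σ) : ∃ i, d i = 0 := by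
  by_contra! hne
  have hcard : Fintype.card σ ≤ ∑ i, d i := by
    simpa using sum_le_sum fun i (_ : i ∈ univ) => Nat.one_le_iff_ne_zero.mpr (hne i)
  have hdeg : ∑ i, d i ≤ p.totalDegree := by
    simpa [Finsupp.sum_fintype] using le_totalDegree hd
  omega

theorem sum_neg_one_pow_card_mul_eval_eq_zero [DecidableEq σ] (p : MvPolynomial σ R)
    (hp : p.totalDegree < Fintype.card σ) :
    ∑ x : σ → Bool, (-1 : R) ^ #{i | x i} * eval (fun i => if x i then (1 : R) else 0) p = 0 := by
  simp only [eval_eq', mul_sum]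
  rw [sum_comm]
  refine sum_eq_zero fun d hd => ?_
  simp only [mul_left_comm _ (coeff d p), ← mul_sum]
  rw [sum_neg_one_pow_card_mul_prod_pow_eq_zero _
    (exists_eq_zero_of_mem_support_of_totalDegree_lt hd hp), mul_zero]

end SignedCubeSum

theorem stmt_0 (n : ℕ) (p : MvPolynomial (Fin n) ℝ)
    (hsign : ∀ x : Fin n → Bool,
      (Even (Finset.univ.filter (fun i => x i)).card →
        0 ≤ eval (fun i => if x i then (1 : ℝ) else 0) p) ∧
      (¬ Even (Finset.univ.filter (fun i => x i)).card →
        eval (fun i => if x i then (1 : ℝ) else 0) p < 0)) :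
    n ≤ p.totalDegree := by
  by_contra! hlt
  have hterm_nonneg (x : Fin n → Bool) :
      0 ≤ (-1 : ℝ) ^ #{i | x i} * eval (fun i => if x i then (1 : ℝ) else 0) p := by
    rcases Nat.even_or_odd #{i | x i} with he | ho
    · simpa [he.neg_one_pow] using (hsign x).1 he
    · simpa [ho.neg_one_pow] using ((hsign x).2 (Nat.not_even_iff_odd.mpr ho)).le
  have i₀ : Fin n := ⟨0, by omega⟩
  have hterm_pos : 0 < (-1 : ℝ) ^ #{i | decide (i = i₀)} *
      eval (fun i => if decide (i = i₀) then (1 : ℝ) else 0) p := by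
    have hodd : ¬ Even #{i | decide (i = i₀)} := by simp [filter_eq']
    simpa [filter_eq'] using (hsign _).2 hodd
  have hsum_pos := sum_pos' (fun x _ => hterm_nonneg x) ⟨_, mem_univ _, hterm_pos⟩
  rw [sum_neg_one_pow_card_mul_eval_eq_zero p (by simpa using hlt)] at hsum_pos
  exact hsum_pos.false
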